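/- arXiv:math/9906072 — 2 statements merged into one kernel-verified Lean document; each statement's English description precedes it below -/
import Mathlib

section
/- With the setup of the previous theorem: let T̃ ∈ L(H ⊕ H') extend T, let λI - T̃ be invertible on an open connected Ω with inverse matrix [[L(λ), S(λ)],[T'(λ), V(λ)]], and suppose S(λ)T'(λ) = 0 for all λ ∈ Ω. Then L satisfies L(λ) - L(μ) = (μ - λ)L(λ)L(μ) for all λ, μ ∈ Ω; in particular L is a left resolvent of T on Ω. -/
theorem block_zero_implies_left_resolvent
    {H H' : Type*} [NormedAddCommGroup H] [InnerProductSpace ℂ H] [CompleteSpace H]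
    [NormedAddCommGroup H'] [InnerProductSpace ℂ H'] [CompleteSpace H']
    (T : H →L[ℂ] H) (Ttil : H × H' →L[ℂ] H × H')
    (hext : ∀ h : H, Ttil (h, 0) = (T h, 0))
    (Ω : Set ℂ) (hΩ : IsOpen Ω) (hconn : IsConnected Ω)
    (R : ℂ → (H × H' →L[ℂ] H × H'))
    (hR1 : ∀ z ∈ Ω, R z * (z • (1 : H × H' →L[ℂ] H × H') - Ttil) = 1)
    (hR2 : ∀ z ∈ Ω, (z • (1 : H × H' →L[ℂ] H × H') - Ttil) * R z = 1)
    (L : ℂ → H →L[ℂ] H) (S : ℂ → H' →L[ℂ] H)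
    (T' : ℂ → H →L[ℂ] H') (V : ℂ → H' →L[ℂ] H')
    (hblock : ∀ z ∈ Ω, ∀ (h : H) (h' : H'),
      R z (h, h') = (L z h + S z h', T' z h + V z h'))
    (hzero : ∀ z ∈ Ω, (S z).comp (T' z) = 0) :
    ∀ z ∈ Ω, ∀ w ∈ Ω, L z - L w = (w - z) • (L z * L w) := by
  classical
  -- Ring.inverse agrees with R on Ω
  have hRinv : ∀ w ∈ Ω, Ring.inverse (w • (1 : H × H' →L[ℂ] H × H') - Ttil) = R w := by
    intro w hw
    have : (w • (1 : H × H' →L[ℂ] H × H') - Ttil)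
        = ((⟨w • (1 : H × H' →L[ℂ] H × H') - Ttil, R w, hR2 w hw, hR1 w hw⟩ :
            (H × H' →L[ℂ] H × H')ˣ) : H × H' →L[ℂ] H × H') := rfl
    rw [this, Ring.inverse_unit]
    rfl
  -- derivative of R
  have hRderiv : ∀ w ∈ Ω, HasDerivAt R (-(R w * R w)) w := by
    intro w hw
    letI : NormedSpace ℂ (H × H') := inferInstance
    have hu : HasDerivAt (fun y : ℂ => y • (1 : H × H' →L[ℂ] H × H') - Ttil)
        (1 : H × H' →L[ℂ] H × H') w := by
      simpa using ((hasDerivAt_id w).smul_const (1 : H × H' →L[ℂ] H × H')).sub_const Ttil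
    have hinv := hasFDerivAt_ringInverse
      (𝕜 := ℂ) (⟨w • (1 : H × H' →L[ℂ] H × H') - Ttil, R w, hR2 w hw, hR1 w hw⟩ :
        (H × H' →L[ℂ] H × H')ˣ)
    have hcomp := hinv.comp_hasDerivAt w hu
    have heq : R =ᶠ[nhds w] (Ring.inverse ∘ fun y : ℂ => y • (1 : H × H' →L[ℂ] H × H') - Ttil) := by
      filter_upwards [hΩ.mem_nhds hw] with y hy
      simp [hRinv y hy]
    have := hcomp.congr_of_eventuallyEq heq
    simpa [ContinuousLinearMap.mulLeftRight_apply] using this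
  -- derivative of L
  have hLval : ∀ w ∈ Ω, ∀ h : H, R w (h, 0) = (L w h, T' w h) := by
    intro w hw h
    simpa using hblock w hw h 0
  have hLeq : ∀ w ∈ Ω, L w = (ContinuousLinearMap.fst ℂ H H').comp
      ((R w).comp (ContinuousLinearMap.inl ℂ H H')) := by
    intro w hw
    ext h
    simp [hLval w hw h]
  have hLderiv : ∀ w ∈ Ω, HasDerivAt L (-(L w * L w)) w := by
    intro w hw
    have h1 : HasDerivAt (fun y => (ContinuousLinearMap.fst ℂ H H').comp
        ((R y).comp (ContinuousLinearMap.inl ℂ H H')))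
        ((ContinuousLinearMap.fst ℂ H H').comp
          ((-(R w * R w)).comp (ContinuousLinearMap.inl ℂ H H'))) w := by
      simpa using (hasDerivAt_const w (ContinuousLinearMap.fst ℂ H H')).clm_comp
        ((hRderiv w hw).clm_comp (hasDerivAt_const w (ContinuousLinearMap.inl ℂ H H')))
    have heq : L =ᶠ[nhds w] (fun y => (ContinuousLinearMap.fst ℂ H H').comp
        ((R y).comp (ContinuousLinearMap.inl ℂ H H'))) := by
      filter_upwards [hΩ.mem_nhds hw] with y hy
      exact hLeq y hy
    have h2 := h1.congr_of_eventuallyEq heq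
    have hval : (ContinuousLinearMap.fst ℂ H H').comp
        ((-(R w * R w)).comp (ContinuousLinearMap.inl ℂ H H')) = -(L w * L w) := by
      ext h
      have hz0 : S w (T' w h) = 0 := by
        have := hzero w hw
        exact DFunLike.congr_fun this h
      simp [ContinuousLinearMap.mul_apply, hLval w hw h, hblock w hw (L w h) (T' w h), hz0]
    rwa [hval] at h2
  -- Main argument
  intro z hz
  set D : ℂ → (H →L[ℂ] H) := fun w => L z - L w - (w - z) • (L z * L w) with hD
  suffices hsuff : Set.EqOn D 0 Ω by
    intro w hw
    have := hsuff hw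
    simp only [hD, Pi.zero_apply] at this
    exact sub_eq_zero.mp this
  -- derivative of D
  have hDderiv : ∀ w ∈ Ω, HasDerivAt D (-(D w * L w)) w := by
    intro w hw
    have h1 : HasDerivAt (fun y => L z - L y) (0 - -(L w * L w)) w :=
      (hasDerivAt_const w (L z)).sub (hLderiv w hw)
    have h2 : HasDerivAt (fun y : ℂ => (y - z) • (L z * L y))
        ((w - z) • (L z * -(L w * L w)) + (1 : ℂ) • (L z * L w)) w :=
      ((hasDerivAt_id w).sub_const z).smul ((hLderiv w hw).const_mul (L z))
    have h3 := h1.sub h2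
    have hval : 0 - -(L w * L w) - ((w - z) • (L z * -(L w * L w)) + (1 : ℂ) • (L z * L w))
        = -(D w * L w) := by
      simp only [hD]
      simp [sub_mul, smul_mul_assoc, mul_assoc, mul_neg, smul_neg, one_smul, zero_sub,
        neg_neg, neg_sub, neg_add]
      abel
    rwa [hval] at h3
  -- D vanishes near z
  have hDz : D z = 0 := by simp [hD]
  have hDcont : ∀ w ∈ Ω, ContinuousAt D w := fun w hw => (hDderiv w hw).continuousAt
  have hLcont : ∀ w ∈ Ω, ContinuousAt L w := fun w hw => (hLderiv w hw).continuousAt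
  obtain ⟨ε, hε, hball⟩ := Metric.isOpen_iff.mp hΩ z hz
  -- bound for L on the closed ball of radius ε/2
  have hcb : Metric.closedBall z (ε / 2) ⊆ Ω := by
    intro x hx
    exact hball (lt_of_le_of_lt (Metric.mem_closedBall.mp hx) (by linarith))
  have hcomp : IsCompact (Metric.closedBall z (ε / 2)) := isCompact_closedBall z (ε / 2)
  have hLconts : ContinuousOn L (Metric.closedBall z (ε / 2)) :=
    fun x hx => ((hLcont x (hcb hx)).continuousWithinAt)
  obtain ⟨xM, hxM, hxMmax⟩ := hcomp.exists_isMaxOn (Metric.nonempty_closedBall.mpr (by positivity))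
    (continuous_norm.comp_continuousOn hLconts)
  set M : ℝ := ‖L xM‖ + 1 with hM
  have hMpos : 0 < M := by positivity
  have hLbound : ∀ x ∈ Metric.closedBall z (ε / 2), ‖L x‖ ≤ M := by
    intro x hx
    have := hxMmax hx
    simp only [Function.comp] at this
    calc ‖L x‖ ≤ ‖L xM‖ := this
    _ ≤ M := by simp [hM]
  set δ : ℝ := min (ε / 2) (1 / (2 * M)) with hδ
  have hδpos : 0 < δ := lt_min (by linarith) (by positivity)
  have hδball : Metric.closedBall z δ ⊆ Metric.closedBall z (ε / 2) :=
    Metric.closedBall_subset_closedBall (min_le_left _ _)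
  -- D vanishes on the closed ball of radius δ
  obtain ⟨yM, hyM, hyMmax⟩ := (isCompact_closedBall z δ).exists_isMaxOn
    (Metric.nonempty_closedBall.mpr hδpos.le)
    (continuous_norm.comp_continuousOn
      (fun x hx => ((hDcont x (hcb (hδball hx))).continuousWithinAt)))
  have hDball : ∀ x ∈ Metric.closedBall z δ, D x = 0 := by
    have key : ‖D yM‖ ≤ (‖D yM‖ * M) * ‖yM - z‖ := by
      have := Convex.norm_image_sub_le_of_norm_hasFDerivWithin_le
        (f := D) (f' := fun x => ContinuousLinearMap.smulRight (1 : ℂ →L[ℂ] ℂ) (-(D x * L x)))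
        (s := Metric.closedBall z δ) (C := ‖D yM‖ * M)
        (fun x hx => ((hDderiv x (hcb (hδball hx))).hasFDerivAt).hasFDerivWithinAt)
        (fun x hx => by
          rw [ContinuousLinearMap.norm_smulRight_apply]
          have h1 : ‖D x‖ ≤ ‖D yM‖ := hyMmax hx
          have h2 : ‖L x‖ ≤ M := hLbound x (hδball hx)
          calc ‖(1 : ℂ →L[ℂ] ℂ)‖ * ‖-(D x * L x)‖ ≤ 1 * (‖D x‖ * ‖L x‖) := by
                rw [norm_neg]
                exact mul_le_mul (ContinuousLinearMap.norm_id_le) (ContinuousLinearMap.opNorm_comp_le _ _) (norm_nonneg _) zero_le_one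
          _ ≤ ‖D yM‖ * M := by
                rw [one_mul]
                exact mul_le_mul h1 h2 (norm_nonneg _) (norm_nonneg _))
        (convex_closedBall z δ) (Metric.mem_closedBall_self hδpos.le) hyM
      simpa [hDz] using this
    have hnorm0 : ‖D yM‖ = 0 := by
      by_contra hne
      have hpos : 0 < ‖D yM‖ := lt_of_le_of_ne (norm_nonneg _) (Ne.symm hne)
      have hdist : ‖yM - z‖ ≤ 1 / (2 * M) := by
        have := Metric.mem_closedBall.mp hyM
        rw [dist_eq_norm] at this
        exact this.trans (min_le_right _ _)
      have : ‖D yM‖ ≤ ‖D yM‖ * M * (1 / (2 * M)) :=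
        key.trans (by
          apply mul_le_mul_of_nonneg_left hdist
          positivity)
      have heq : ‖D yM‖ * M * (1 / (2 * M)) = ‖D yM‖ / 2 := by
        field_simp
      rw [heq] at this
      linarith
    intro x hx
    have := hyMmax hx
    simp only [Function.comp] at this
    have : ‖D x‖ ≤ 0 := by rw [← hnorm0]; exact this
    simpa using le_antisymm this (norm_nonneg _)
  -- identity theorem
  have hDan : AnalyticOnNhd ℂ D Ω := by
    apply DifferentiableOn.analyticOnNhd _ hΩ
    intro x hx
    exact ((hDderiv x hx).differentiableAt).differentiableWithinAt
  have hev : D =ᶠ[nhds z] 0 := by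
    filter_upwards [Metric.closedBall_mem_nhds z hδpos] with x hx
    exact hDball x hx
  exact hDan.eqOn_zero_of_preconnected_of_eventuallyEq_zero hconn.isPreconnected hz hev
end

section
/- Let Ω ⊆ ℂ open, T ∈ L(H), and P : Ω → L(H) with P(λ) = (λI - T)L(λ) where L is a left resolvent of T on Ω (i.e., L(λ)(λI - T) = I and the resolvent identity holds). Then P(λ)P(μ) = P(λ) for all λ, μ ∈ Ω. -/
/-! Writing `w - T = (w - z) + (z - T)` gives `L z (w - T) = (w - z) L z + 1`, so by the resolvent
identity `L z (w - T) L w = (w - z) L z L w + L w = L z`; multiplying on the left by `z - T`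
yields `P z P w = P z`. -/

section LeftResolvent

variable {R A : Type*} [CommRing R] [Ring A] [Algebra R A]

theorem mul_smul_one_sub_eq_smul_add_one {t l : A} {z : R} (hinv : l * (z • 1 - t) = 1)
    (w : R) : l * (w • 1 - t) = (w - z) • l + 1 := by
  have hsplit : w • (1 : A) - t = (w - z) • 1 + (z • 1 - t) := by
    rw [sub_smul]
    abel
  rw [hsplit, mul_add, hinv, mul_smul_comm, mul_one]

theorem mul_smul_one_sub_mul_eq_self {t l m : A} {z w : R} (hinv : l * (z • 1 - t) = 1)
    (hres : l - m = (w - z) • (l * m)) : l * ((w • 1 - t) * m) = l := by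
  rw [← mul_assoc, mul_smul_one_sub_eq_smul_add_one hinv, add_mul, one_mul, smul_mul_assoc,
    ← hres, sub_add_cancel]

end LeftResolvent

theorem P_lambda_P_mu_eq_P_lambda_general
    {H : Type*} [NormedAddCommGroup H] [InnerProductSpace ℂ H]
    (T : H →L[ℂ] H) (Ω : Set ℂ)
    (L : ℂ → H →L[ℂ] H)
    (hinv : ∀ z ∈ Ω, L z * (z • (1 : H →L[ℂ] H) - T) = 1)
    (hres : ∀ z ∈ Ω, ∀ w ∈ Ω, L z - L w = (w - z) • (L z * L w))
    (P : ℂ → H →L[ℂ] H)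
    (hP : ∀ z ∈ Ω, P z = (z • (1 : H →L[ℂ] H) - T) * L z) :
    ∀ z ∈ Ω, ∀ w ∈ Ω, P z * P w = P z := by
  intro z hz w hw
  rw [hP z hz, hP w hw, mul_assoc, mul_smul_one_sub_mul_eq_self (hinv z hz) (hres z hz w hw)]

theorem P_lambda_P_mu_eq_P_lambda
    {H : Type*} [NormedAddCommGroup H] [InnerProductSpace ℂ H] [CompleteSpace H]
    (T : H →L[ℂ] H) (Ω : Set ℂ) (hΩ : IsOpen Ω)
    (L : ℂ → H →L[ℂ] H)
    (hinv : ∀ z ∈ Ω, L z * (z • (1 : H →L[ℂ] H) - T) = 1)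
    (hres : ∀ z ∈ Ω, ∀ w ∈ Ω, L z - L w = (w - z) • (L z * L w))
    (P : ℂ → H →L[ℂ] H)
    (hP : ∀ z ∈ Ω, P z = (z • (1 : H →L[ℂ] H) - T) * L z) :
    ∀ z ∈ Ω, ∀ w ∈ Ω, P z * P w = P z :=
  P_lambda_P_mu_eq_P_lambda_general T Ω L hinv hres P hP
end
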